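/- The system of base spaces $\{L_{ij} : 1 \le i < j \le N\}$ of the hard ball system is transitive: the subgroup of the special orthogonal group of $\mathcal{Z}$ generated by the groups $\mathcal{G}_{ij} = \{U \in \mathrm{SO}(\mathcal{Z}) : U a = a \text{ for all } a \in L_{ij}^{\perp}\}$ acts transitively on the unit sphere of $\mathcal{Z}$. -/

import Mathlib

noncomputable section

/-- The zero-total-momentum subspace `𝒵 ⊆ (ℝ^ν)^N`. -/
def momZero (N ν : ℕ) : Submodule ℝ (EuclideanSpace ℝ (Fin N × Fin ν)) where
  carrier := {v | ∀ a : Fin ν, ∑ i : Fin N, v (i, a) = 0}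
  add_mem' := by
    intro x y hx hy a
    simp only [Set.mem_setOf_eq, PiLp.add_apply] at *
    simp [Finset.sum_add_distrib, hx a, hy a]
  zero_mem' := by intro a; simp
  smul_mem' := by
    intro c x hx a
    simp only [Set.mem_setOf_eq, PiLp.smul_apply, smul_eq_mul] at *
    simp [← Finset.mul_sum, hx a]

/-- The base space `L_{ij} ⊆ 𝒵`: velocities supported on balls `i` and `j`. -/
def baseSpace (N ν : ℕ) (i j : Fin N) : Submodule ℝ ↥(momZero N ν) where
  carrier := {v | ∀ m : Fin N, m ≠ i → m ≠ j → ∀ a : Fin ν,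
    (v : EuclideanSpace ℝ (Fin N × Fin ν)) (m, a) = 0}
  add_mem' := by
    intro x y hx hy m hm1 hm2 a
    simp [Set.mem_setOf_eq] at *
    simp [hx m hm1 hm2 a, hy m hm1 hm2 a]
  zero_mem' := by intro m _ _ a; simp
  smul_mem' := by
    intro c x hx m hm1 hm2 a
    simp [Set.mem_setOf_eq] at *
    simp [hx m hm1 hm2 a]

/-- The group `𝒢_{ij} = {U ∈ SO(𝒵) : U a = a for all a ∈ L_{ij}ᗮ}`. -/
def rotBall (N ν : ℕ) (i j : Fin N) :
    Set (↥(momZero N ν) ≃ₗᵢ[ℝ] ↥(momZero N ν)) :=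
  {U | LinearEquiv.det U.toLinearEquiv = 1 ∧ ∀ a ∈ (baseSpace N ν i j)ᗮ, U a = a}

/-!
A collision of balls `i` and `j` adds some `d ∈ ℝ^ν` to the velocity of `i` and subtracts it from
that of `j`; when it conserves kinetic energy it is realized by an element of `𝒢_{ij}`, a product of
two hyperplane reflections (this is where `ν ≥ 2` enters). Since the total momentum vanishes, a
moving ball `k` has a partner `l` with `⟪v_k, v_l⟫ < 0`, and two collisions, with `l` and then with
a helper ball, stop `k` without setting any resting ball in motion. Stopping every ball except the
helpers `0` and `1` moves each state into `L_{01}`, where two states of equal norm are related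
by `𝒢_{01}`.
-/

open scoped RealInnerProductSpace
open Module Finset

section InnerProductSpace

variable {F : Type*} [NormedAddCommGroup F] [InnerProductSpace ℝ F]

theorem exists_inner_neg_of_sum_eq_zero {ι : Type*} [Fintype ι] {x : ι → F}
    (hx : ∑ i, x i = 0) {k : ι} (hk : x k ≠ 0) : ∃ l ≠ k, ⟪x k, x l⟫ < 0 := by
  classical
  have hsum : ∑ l ∈ univ.erase k, ⟪x k, x l⟫ < ∑ _l ∈ univ.erase k, (0 : ℝ) := by
    have h := add_sum_erase univ (fun l => ⟪x k, x l⟫) (mem_univ k)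
    rw [← inner_sum (s := univ), hx, inner_zero_right, real_inner_self_eq_norm_sq] at h
    rw [sum_const_zero]
    nlinarith [norm_pos_iff.2 hk]
  obtain ⟨l, hl, hlt⟩ := exists_lt_of_sum_lt hsum
  exact ⟨l, ne_of_mem_erase hl, hlt⟩

variable [FiniteDimensional ℝ F]

theorem Submodule.exists_mem_ne_zero_inner_eq_zero {K : Submodule ℝ F} (hK : 1 < finrank ℝ K)
    (w : F) : ∃ g ∈ K, g ≠ 0 ∧ ⟪g, w⟫ = 0 := by
  have hker : LinearMap.ker ((innerₛₗ ℝ w).comp K.subtype) ≠ ⊥ :=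
    LinearMap.ker_ne_bot_of_finrank_lt (by rwa [finrank_self])
  obtain ⟨g, hg, hg0⟩ := Submodule.exists_mem_ne_zero_of_ne_bot hker
  refine ⟨g, g.2, by simpa using hg0, ?_⟩
  simpa [real_inner_comm] using hg

/-- Since `⟪a, b⟫ ≤ 0`, the origin lies in the closed ball with diameter `[a, b]`, so every
hyperplane through the origin meets the boundary sphere `{c | ⟪c - a, c - b⟫ = 0}`. -/
theorem exists_inner_sub_sub_eq_zero_inner_eq_zero (hF : 1 < finrank ℝ F) {a b : F}
    (hab : ⟪a, b⟫ ≤ 0) (z : F) : ∃ c, ⟪c - a, c - b⟫ = 0 ∧ ⟪c, z⟫ = 0 := by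
  obtain ⟨e, -, he, hez⟩ :=
    (⊤ : Submodule ℝ F).exists_mem_ne_zero_inner_eq_zero (by rwa [finrank_top]) z
  have hee : ⟪e, e⟫ ≠ 0 := inner_self_ne_zero.2 he
  have hdisc : 0 ≤ discrim ⟪e, e⟫ (-⟪e, a + b⟫) ⟪a, b⟫ := by
    rw [discrim]
    nlinarith [real_inner_self_nonneg (x := e), sq_nonneg ⟪e, a + b⟫]
  obtain ⟨t, ht⟩ := exists_quadratic_eq_zero hee ⟨_, (Real.mul_self_sqrt hdisc).symm⟩
  refine ⟨t • e, ?_, by rw [real_inner_smul_left, hez, mul_zero]⟩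
  simp only [inner_sub_left, inner_sub_right, inner_add_right, real_inner_smul_left,
    real_inner_smul_right, real_inner_comm a e] at ht ⊢
  linarith

theorem Submodule.det_reflection_orthogonal_span_singleton {g : F} (hg : g ≠ 0) :
    LinearMap.det (ℝ ∙ g)ᗮ.reflection.toLinearMap = -1 := by
  rw [Submodule.det_reflection, Submodule.orthogonal_orthogonal, finrank_span_singleton hg,
    pow_one]

/-- A product of two hyperplane reflections: the one in `(v - w)ᗮ` sends `v` to `w`, and the one
in `gᗮ`, for some `g ∈ K` orthogonal to `w`, restores the orientation while fixing `w`. -/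
theorem exists_rotation_of_sub_mem {K : Submodule ℝ F} (hK : 1 < finrank ℝ K) {v w : F}
    (hvw : ‖v‖ = ‖w‖) (hsub : v - w ∈ K) :
    ∃ U : F ≃ₗᵢ[ℝ] F, (LinearEquiv.det U.toLinearEquiv = 1 ∧ ∀ a ∈ Kᗮ, U a = a) ∧ U v = w := by
  rcases eq_or_ne v w with rfl | hne
  · exact ⟨1, ⟨map_one _, fun _ _ => rfl⟩, rfl⟩
  obtain ⟨g, hgK, hg0, hgw⟩ := K.exists_mem_ne_zero_inner_eq_zero hK w
  refine ⟨(ℝ ∙ (v - w))ᗮ.reflection.trans (ℝ ∙ g)ᗮ.reflection, ⟨?_, fun a ha => ?_⟩, ?_⟩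
  · ext
    rw [LinearEquiv.coe_det]
    change LinearMap.det ((ℝ ∙ g)ᗮ.reflection.toLinearMap ∘ₗ
      (ℝ ∙ (v - w))ᗮ.reflection.toLinearMap) = 1
    rw [LinearMap.det_comp, Submodule.det_reflection_orthogonal_span_singleton hg0,
      Submodule.det_reflection_orthogonal_span_singleton (sub_ne_zero.2 hne)]
    norm_num
  · have hfix : ∀ x ∈ K, (ℝ ∙ x)ᗮ.reflection a = a := fun x hx =>
      Submodule.reflection_mem_subspace_eq_self <|
        Submodule.mem_orthogonal_singleton_iff_inner_right.2 <|
          Submodule.inner_right_of_mem_orthogonal hx ha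
    rw [LinearIsometryEquiv.trans_apply, hfix _ hsub, hfix _ hgK]
  · rw [LinearIsometryEquiv.trans_apply, Submodule.reflection_sub hvw]
    exact Submodule.reflection_mem_subspace_eq_self
      (Submodule.mem_orthogonal_singleton_iff_inner_right.2 hgw)

end InnerProductSpace

namespace HardBall

variable {N ν : ℕ}

def velocity (m : Fin N) : momZero N ν →ₗ[ℝ] EuclideanSpace ℝ (Fin ν) where
  toFun v := WithLp.toLp 2 fun a => (v : EuclideanSpace ℝ (Fin N × Fin ν)) (m, a)
  map_add' _ _ := rfl
  map_smul' _ _ := rfl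

@[simp]
theorem velocity_apply (m : Fin N) (v : momZero N ν) (a : Fin ν) :
    velocity m v a = (v : EuclideanSpace ℝ (Fin N × Fin ν)) (m, a) :=
  rfl

theorem inner_eq_sum_inner_velocity (v w : momZero N ν) :
    ⟪v, w⟫ = ∑ m, ⟪velocity m v, velocity m w⟫ := by
  simp [Submodule.coe_inner, PiLp.inner_apply, Fintype.sum_prod_type]

theorem sum_velocity (v : momZero N ν) : ∑ m, velocity m v = 0 := by
  ext a
  simpa using v.2 a

theorem velocity_eq_zero_iff {m : Fin N} {v : momZero N ν} :
    velocity m v = 0 ↔ ∀ a, (v : EuclideanSpace ℝ (Fin N × Fin ν)) (m, a) = 0 := by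
  simp [PiLp.ext_iff]

theorem mem_baseSpace_iff {i j : Fin N} {v : momZero N ν} :
    v ∈ baseSpace N ν i j ↔ ∀ m, m ≠ i → m ≠ j → velocity m v = 0 := by
  simp only [velocity_eq_zero_iff]
  rfl

theorem baseSpace_comm (i j : Fin N) : baseSpace N ν i j = baseSpace N ν j i := by
  ext v
  simp only [mem_baseSpace_iff]
  exact forall_congr' fun m => Imp.swap

def collision (i j : Fin N) : EuclideanSpace ℝ (Fin ν) →ₗ[ℝ] momZero N ν where
  toFun d := ⟨WithLp.toLp 2 fun q =>
      ((if q.1 = i then 1 else 0) - (if q.1 = j then 1 else 0)) * d q.2,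
    fun a => by simp [← sum_mul, sum_sub_distrib]⟩
  map_add' d e := by ext q; simp [mul_add]
  map_smul' c d := by ext q; simp; ring

theorem velocity_collision (m i j : Fin N) (d : EuclideanSpace ℝ (Fin ν)) :
    velocity m (collision i j d) =
      ((if m = i then 1 else 0) - (if m = j then 1 else 0) : ℝ) • d := by
  ext a
  simp [collision]

theorem inner_collision_left (i j : Fin N) (d : EuclideanSpace ℝ (Fin ν)) (v : momZero N ν) :
    ⟪collision i j d, v⟫ = ⟪d, velocity i v - velocity j v⟫ := by
  rw [inner_eq_sum_inner_velocity]
  simp [velocity_collision, real_inner_smul_left, sub_mul, ite_mul, inner_sub_right,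
    sum_sub_distrib]

variable {i j : Fin N}

theorem velocity_collision_left (hij : i ≠ j) (d : EuclideanSpace ℝ (Fin ν)) :
    velocity i (collision i j d) = d := by
  simp [velocity_collision, hij]

theorem velocity_collision_right (hij : i ≠ j) (d : EuclideanSpace ℝ (Fin ν)) :
    velocity j (collision i j d) = -d := by
  simp [velocity_collision, hij.symm]

theorem velocity_collision_of_ne {m : Fin N} (hmi : m ≠ i) (hmj : m ≠ j)
    (d : EuclideanSpace ℝ (Fin ν)) : velocity m (collision i j d) = 0 := by
  simp [velocity_collision, hmi, hmj]

theorem collision_mem_baseSpace (d : EuclideanSpace ℝ (Fin ν)) :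
    collision i j d ∈ baseSpace N ν i j :=
  mem_baseSpace_iff.2 fun _ hmi hmj => velocity_collision_of_ne hmi hmj d

theorem le_finrank_baseSpace (hij : i ≠ j) : ν ≤ finrank ℝ (baseSpace N ν i j) := by
  have hinj : Function.Injective ((collision i j).codRestrict _ collision_mem_baseSpace :
      EuclideanSpace ℝ (Fin ν) →ₗ[ℝ] baseSpace N ν i j) := fun d e hde => by
    simpa [velocity_collision_left hij] using
      congrArg (velocity i ∘ Subtype.val) hde
  simpa using LinearMap.finrank_le_finrank_of_injective hinj

theorem norm_add_collision_sq (hij : i ≠ j) (v : momZero N ν) (d : EuclideanSpace ℝ (Fin ν)) :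
    ‖v + collision i j d‖ ^ 2 = ‖v‖ ^ 2 + 2 * ⟪d, velocity i v - velocity j v + d⟫ := by
  rw [norm_add_sq_real, real_inner_comm, inner_collision_left,
    ← real_inner_self_eq_norm_sq (collision i j d),
    inner_collision_left, velocity_collision_left hij, velocity_collision_right hij]
  simp only [inner_add_right, inner_sub_right, inner_neg_right]
  ring

def collisionGroup (N ν : ℕ) : Subgroup (momZero N ν ≃ₗᵢ[ℝ] momZero N ν) :=
  Subgroup.closure (⋃ (p : Fin N × Fin N) (_ : p.1 < p.2), rotBall N ν p.1 p.2)

theorem rotBall_comm (i j : Fin N) : rotBall N ν i j = rotBall N ν j i := by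
  rw [rotBall, rotBall, baseSpace_comm]

theorem rotBall_subset_collisionGroup (hij : i ≠ j) : rotBall N ν i j ⊆ collisionGroup N ν := by
  intro U hU
  apply Subgroup.subset_closure
  simp only [Set.mem_iUnion, Prod.exists]
  rcases hij.lt_or_gt with h | h
  · exact ⟨i, j, h, hU⟩
  · exact ⟨j, i, h, rotBall_comm i j ▸ hU⟩

def Reaches (v w : momZero N ν) : Prop :=
  ∃ U ∈ collisionGroup N ν, U v = w

theorem Reaches.refl (v : momZero N ν) : Reaches v v :=
  ⟨1, Subgroup.one_mem _, rfl⟩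

theorem Reaches.trans {u v w : momZero N ν} (huv : Reaches u v) (hvw : Reaches v w) :
    Reaches u w := by
  obtain ⟨U, hU, rfl⟩ := huv
  obtain ⟨V, hV, rfl⟩ := hvw
  exact ⟨V * U, Subgroup.mul_mem _ hV hU, rfl⟩

theorem Reaches.symm {v w : momZero N ν} (hvw : Reaches v w) : Reaches w v := by
  obtain ⟨U, hU, rfl⟩ := hvw
  exact ⟨U⁻¹, Subgroup.inv_mem _ hU, U.symm_apply_apply v⟩

theorem Reaches.norm_eq {v w : momZero N ν} (hvw : Reaches v w) : ‖v‖ = ‖w‖ := by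
  obtain ⟨U, -, rfl⟩ := hvw
  exact (U.norm_map v).symm

theorem reaches_of_sub_mem_baseSpace (hν : 2 ≤ ν) (hij : i ≠ j) {v w : momZero N ν}
    (hvw : ‖v‖ = ‖w‖) (hsub : v - w ∈ baseSpace N ν i j) : Reaches v w := by
  obtain ⟨U, hU, hUv⟩ :=
    exists_rotation_of_sub_mem (hν.trans (le_finrank_baseSpace hij)) hvw hsub
  exact ⟨U, rotBall_subset_collisionGroup hij hU, hUv⟩

theorem reaches_add_collision (hν : 2 ≤ ν) (hij : i ≠ j) (v : momZero N ν)
    {d : EuclideanSpace ℝ (Fin ν)} (hd : ⟪d, velocity i v - velocity j v + d⟫ = 0) :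
    Reaches v (v + collision i j d) := by
  refine reaches_of_sub_mem_baseSpace hν hij ?_ ?_
  · rw [← sq_eq_sq₀ (norm_nonneg _) (norm_nonneg _), norm_add_collision_sq hij, hd, mul_zero,
      add_zero]
  · simpa using neg_mem (collision_mem_baseSpace d)

/-- The collision with `l` turns `v_k` into some `c ⊥ v_p`, which is possible as `⟪v_k, v_l⟫ < 0`;
the collision with the helper `p` then stops `k`. -/
theorem exists_reaches_velocity_eq_zero (hν : 2 ≤ ν) {p₀ p₁ k : Fin N} (hp : p₀ ≠ p₁)
    (hk₀ : k ≠ p₀) (hk₁ : k ≠ p₁) {S : Finset (Fin N)} (hS₀ : p₀ ∉ S) (hS₁ : p₁ ∉ S)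
    {v : momZero N ν} (hv : ∀ m ∈ S, velocity m v = 0) :
    ∃ x, Reaches v x ∧ ∀ m ∈ insert k S, velocity m x = 0 := by
  by_cases hk : velocity k v = 0
  · exact ⟨v, Reaches.refl v, forall_mem_insert _ _ _ |>.2 ⟨hk, hv⟩⟩
  obtain ⟨l, hlk, hkl⟩ := exists_inner_neg_of_sum_eq_zero (sum_velocity v) hk
  have hl : velocity l v ≠ 0 := fun h => by simp [h] at hkl
  obtain ⟨p, hpk, hpl, hpS⟩ : ∃ p, p ≠ k ∧ p ≠ l ∧ p ∉ S := by
    by_cases hl₀ : l = p₀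
    · exact ⟨p₁, hk₁.symm, hl₀ ▸ hp.symm, hS₁⟩
    · exact ⟨p₀, hk₀.symm, Ne.symm hl₀, hS₀⟩
  obtain ⟨c, hc, hcp⟩ := exists_inner_sub_sub_eq_zero_inner_eq_zero
    (by rw [finrank_euclideanSpace_fin]; omega) hkl.le (velocity p v)
  set w := v + collision k l (c - velocity k v)
  have hvw : Reaches v w := reaches_add_collision hν hlk.symm v (by
    rwa [show velocity k v - velocity l v + (c - velocity k v) = c - velocity l v by abel])
  have hwk : velocity k w = c := by
    simp [w, velocity_collision_left hlk.symm]
  have hwp : velocity p w = velocity p v := by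
    simp [w, velocity_collision_of_ne hpk hpl]
  have hwx : Reaches w (w + collision k p (-c)) := reaches_add_collision hν hpk.symm w (by
    rw [hwk, hwp]
    simpa [inner_add_right, inner_sub_right] using hcp)
  refine ⟨_, hvw.trans hwx, forall_mem_insert _ _ _ |>.2 ⟨?_, fun m hm => ?_⟩⟩
  · simp [hwk, velocity_collision_left hpk.symm]
  · have hmk : m ≠ k := fun h => hk (h ▸ hv m hm)
    have hml : m ≠ l := fun h => hl (h ▸ hv m hm)
    have hmp : m ≠ p := fun h => hpS (h ▸ hm)
    simp [w, velocity_collision_of_ne hmk hml, velocity_collision_of_ne hmk hmp, hv m hm]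

theorem exists_reaches_mem_baseSpace (hν : 2 ≤ ν) (hij : i ≠ j) (v : momZero N ν) :
    ∃ x, Reaches v x ∧ x ∈ baseSpace N ν i j := by
  have key : ∀ S : Finset (Fin N), i ∉ S → j ∉ S →
      ∃ x, Reaches v x ∧ ∀ m ∈ S, velocity m x = 0 := by
    intro S
    induction S using Finset.induction_on with
    | empty => exact fun _ _ => ⟨v, Reaches.refl v, by simp⟩
    | insert k S _ ih =>
      intro hi hj
      rw [mem_insert, not_or] at hi hj
      obtain ⟨x, hvx, hx⟩ := ih hi.2 hj.2
      obtain ⟨y, hxy, hy⟩ :=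
        exists_reaches_velocity_eq_zero hν hij (Ne.symm hi.1) (Ne.symm hj.1) hi.2 hj.2 hx
      exact ⟨y, hvx.trans hxy, hy⟩
  obtain ⟨x, hvx, hx⟩ := key {i, j}ᶜ (by simp) (by simp)
  exact ⟨x, hvx, mem_baseSpace_iff.2 fun m hmi hmj => hx m (by simp [hmi, hmj])⟩

end HardBall

/-- The system of base spaces of the hard ball system is transitive: the group
generated by the `𝒢_{ij}` acts transitively on the unit sphere of `𝒵`. -/
theorem hardBall_transitive (N ν : ℕ) (hN : 2 ≤ N) (hν : 2 ≤ ν) :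
    ∀ u w : ↥(momZero N ν), ‖u‖ = 1 → ‖w‖ = 1 →
      ∃ U ∈ Subgroup.closure
          (⋃ (p : Fin N × Fin N) (_ : p.1 < p.2), rotBall N ν p.1 p.2),
        U u = w := by
  intro u w hu hw
  have hp : (⟨0, by omega⟩ : Fin N) ≠ ⟨1, by omega⟩ := by simp
  obtain ⟨u', huu', hu'⟩ := HardBall.exists_reaches_mem_baseSpace hν hp u
  obtain ⟨w', hww', hw'⟩ := HardBall.exists_reaches_mem_baseSpace hν hp w
  have hu'w' : HardBall.Reaches u' w' := HardBall.reaches_of_sub_mem_baseSpace hν hp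
    (by rw [← huu'.norm_eq, ← hww'.norm_eq, hu, hw]) (sub_mem hu' hw')
  exact huu'.trans (hu'w'.trans hww'.symm)
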